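/- Under the sufficient-decrease condition established for PGM with γ ∈ (0, 1/(τL)), if f = g + τh is coercive, then the sequence of iterates (xᵏ) is bounded and every accumulation point x̄ satisfies x̄ = prox_{γg}(x̄ − γτ∇h(x̄)). -/

import Mathlib

/-!
The proximal step at `a` is no worse than staying at `a`; combined with the descent lemma for
`h`, this gives the sufficient decrease
`f x⁽ᵏ⁺¹⁾ + (1/(2γ) - τL/2) ‖x⁽ᵏ⁺¹⁾ - xᵏ‖² ≤ f xᵏ`, whose constant is positive because `γτL < 1`.
Hence `f xᵏ` is nonincreasing, so the iterates stay in a sublevel set of the coercive `f`, which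
is bounded. As a coercive continuous function `f` is bounded below, so `f xᵏ` converges and the
steps `x⁽ᵏ⁺¹⁾ - xᵏ` tend to `0`. Along a subsequence `x^{φ j} → x̄` we therefore also have
`x^{φ j + 1} → x̄`, and the minimality of `x^{φ j + 1}` for the prox objective at `x^{φ j}` passes
to the limit because that objective is jointly continuous (`g` is convex, hence continuous).
-/

open Filter Set Topology

open scoped RealInnerProductSpace

section DescentLemma

variable {E : Type*} [NormedAddCommGroup E] [InnerProductSpace ℝ E] [CompleteSpace E]

theorem le_add_inner_add_sq_of_lipschitz_gradient {h : E → ℝ} {h' : E → E} {L : ℝ}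
    (hdiff : ∀ x, HasGradientAt h (h' x) x) (hlip : ∀ x z, ‖h' x - h' z‖ ≤ L * ‖x - z‖)
    (a p : E) : h p ≤ h a + ⟪h' a, p - a⟫ + L / 2 * ‖p - a‖ ^ 2 := by
  set v := p - a
  -- The claim is `ψ 1 ≤ ψ 0`, and `ψ' ≤ 0` on `[0, 1]` by the Lipschitz bound on `h'`.
  set ψ : ℝ → ℝ := fun t => h (a + t • v) - t * ⟪h' a, v⟫ - L * ‖v‖ ^ 2 / 2 * t ^ 2
  have hψ : ∀ t : ℝ, HasDerivAt ψ (⟪h' (a + t • v), v⟫ - ⟪h' a, v⟫ - L * ‖v‖ ^ 2 * t) t := by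
    intro t
    have hline : HasDerivAt (fun s : ℝ => a + s • v) v t := by
      simpa using ((hasDerivAt_id t).smul_const v).const_add a
    have hcomp := (hdiff (a + t • v)).hasFDerivAt.comp_hasDerivAt t hline
    simp only [InnerProductSpace.toDual_apply_apply] at hcomp
    refine ((hcomp.sub ((hasDerivAt_id t).mul_const ⟪h' a, v⟫)).sub
      ((hasDerivAt_pow 2 t).const_mul (L * ‖v‖ ^ 2 / 2))).congr_deriv ?_
    push_cast
    ring
  have hderiv_nonpos : ∀ t ∈ Ioo (0 : ℝ) 1,
      ⟪h' (a + t • v), v⟫ - ⟪h' a, v⟫ - L * ‖v‖ ^ 2 * t ≤ 0 := by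
    rintro t ⟨ht, -⟩
    have hgrad : ‖h' (a + t • v) - h' a‖ ≤ L * (t * ‖v‖) := by
      simpa [norm_smul, abs_of_pos ht] using hlip (a + t • v) a
    calc ⟪h' (a + t • v), v⟫ - ⟪h' a, v⟫ - L * ‖v‖ ^ 2 * t
        = ⟪h' (a + t • v) - h' a, v⟫ - L * ‖v‖ ^ 2 * t := by rw [inner_sub_left]
      _ ≤ ‖h' (a + t • v) - h' a‖ * ‖v‖ - L * ‖v‖ ^ 2 * t := by
          gcongr; exact real_inner_le_norm _ _
      _ ≤ L * (t * ‖v‖) * ‖v‖ - L * ‖v‖ ^ 2 * t := by gcongr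
      _ = 0 := by ring
  have hanti : AntitoneOn ψ (Icc 0 1) := by
    refine antitoneOn_of_deriv_nonpos (convex_Icc 0 1)
      (fun t _ => (hψ t).continuousAt.continuousWithinAt)
      (fun t _ => (hψ t).differentiableAt.differentiableWithinAt) fun t ht => ?_
    rw [(hψ t).deriv]
    exact hderiv_nonpos t (by simpa using ht)
  have hψ01 := hanti (left_mem_Icc.2 zero_le_one) (right_mem_Icc.2 zero_le_one) zero_le_one
  simp only [ψ, v, zero_smul, add_zero, one_smul, add_sub_cancel, zero_mul, sub_zero,
    one_mul, one_pow] at hψ01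
  linarith

theorem prox_grad_sufficient_decrease {g h : E → ℝ} {h' : E → E} {L τ γ : ℝ}
    (hdiff : ∀ x, HasGradientAt h (h' x) x) (hlip : ∀ x z, ‖h' x - h' z‖ ≤ L * ‖x - z‖)
    (hτ : 0 ≤ τ) (hγ : 0 < γ) {a p : E}
    (hp : IsMinOn (fun u => 1 / 2 * ‖u - (a - (γ * τ) • h' a)‖ ^ 2 + γ * g u) univ p) :
    g p + τ * h p + (1 / (2 * γ) - τ * L / 2) * ‖p - a‖ ^ 2 ≤ g a + τ * h a := by
  set d := p - a
  have hprox : γ * (g p + τ * ⟪h' a, d⟫ + 1 / (2 * γ) * ‖d‖ ^ 2) ≤ γ * g a := by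
    have hcompare := hp (mem_univ a)
    have hexpand : ‖d + (γ * τ) • h' a‖ ^ 2
        = ‖d‖ ^ 2 + 2 * (γ * τ * ⟪h' a, d⟫) + ‖(γ * τ) • h' a‖ ^ 2 := by
      rw [norm_add_sq_real, real_inner_smul_right, real_inner_comm]
    have hshift : p - (a - (γ * τ) • h' a) = d + (γ * τ) • h' a := by simp only [d]; abel
    simp only [mem_ofPred_eq, sub_sub_cancel, hshift, hexpand] at hcompare
    field_simp
    linarith
  have hdescent := mul_le_mul_of_nonneg_left
    (le_add_inner_add_sq_of_lipschitz_gradient hdiff hlip a p) hτ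
  nlinarith [le_of_mul_le_mul_left hprox hγ]

end DescentLemma

theorem mul_lt_one_of_lt_one_div {a b : ℝ} (ha : 0 < a) (hab : a < 1 / b) : a * b < 1 := by
  rcases le_or_gt b 0 with hb | hb
  · nlinarith
  · rwa [lt_div_iff₀ hb] at hab

theorem antitone_of_sufficient_decrease {E : Type*} [SeminormedAddCommGroup E] {x : ℕ → E}
    {v : ℕ → ℝ} {c : ℝ} (hc : 0 ≤ c) (hdec : ∀ k, v (k + 1) + c * ‖x (k + 1) - x k‖ ^ 2 ≤ v k) :
    Antitone v :=
  antitone_nat_of_succ_le fun k => by nlinarith [hdec k, sq_nonneg ‖x (k + 1) - x k‖]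

theorem tendsto_succ_sub_nhds_zero_of_sufficient_decrease {E : Type*} [SeminormedAddCommGroup E]
    {x : ℕ → E} {v : ℕ → ℝ} {c : ℝ} (hc : 0 < c)
    (hdec : ∀ k, v (k + 1) + c * ‖x (k + 1) - x k‖ ^ 2 ≤ v k) (hbdd : BddBelow (range v)) :
    Tendsto (fun k => x (k + 1) - x k) atTop (𝓝 0) := by
  have hv := tendsto_atTop_ciInf (antitone_of_sufficient_decrease hc.le hdec) hbdd
  have hgap : Tendsto (fun k => (v k - v (k + 1)) / c) atTop (𝓝 0) := by
    simpa using (hv.sub (hv.comp (tendsto_add_atTop_nat 1))).div_const c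
  have hsq : Tendsto (fun k => ‖x (k + 1) - x k‖ ^ 2) atTop (𝓝 0) :=
    squeeze_zero (fun k => sq_nonneg _)
      (fun k => by rw [le_div_iff₀ hc]; linarith [hdec k]) hgap
  rw [tendsto_zero_iff_norm_tendsto_zero]
  simpa [Function.comp_def, Real.sqrt_sq (norm_nonneg _)] using
    (Real.continuous_sqrt.tendsto 0).comp hsq

section Coercive

variable {E : Type*} [NormedAddCommGroup E] {f : E → ℝ}

theorem exists_norm_le_of_coercive (hf : ∀ M : ℝ, ∃ r : ℝ, ∀ x, r ≤ ‖x‖ → M ≤ f x) (M : ℝ) :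
    ∃ r : ℝ, ∀ x, f x ≤ M → ‖x‖ ≤ r := by
  obtain ⟨r, hr⟩ := hf (M + 1)
  exact ⟨r, fun x hx => le_of_not_ge fun hle => by linarith [hr x hle]⟩

theorem tendsto_cocompact_atTop_of_coercive [ProperSpace E]
    (hf : ∀ M : ℝ, ∃ r : ℝ, ∀ x, r ≤ ‖x‖ → M ≤ f x) : Tendsto f (cocompact E) atTop :=
  tendsto_atTop.2 fun M =>
    let ⟨r, hr⟩ := hf M
    (tendsto_norm_cocompact_atTop.eventually_ge_atTop r).mono hr

end Coercive

theorem isMinOn_of_tendsto {ι X Y α : Type*} [TopologicalSpace X] [TopologicalSpace Y]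
    [TopologicalSpace α] [Preorder α] [OrderClosedTopology α] {Φ : X → Y → α}
    (hΦ : Continuous (Function.uncurry Φ)) {l : Filter ι} [l.NeBot] {s : Set X}
    {p : ι → X} {a : ι → Y} {pb : X} {ab : Y} (hmin : ∀ i, IsMinOn (fun u => Φ u (a i)) s (p i))
    (hp : Tendsto p l (𝓝 pb)) (ha : Tendsto a l (𝓝 ab)) :
    IsMinOn (fun u => Φ u ab) s pb := fun _ hu =>
  le_of_tendsto_of_tendsto' ((hΦ.tendsto _).comp (hp.prodMk_nhds ha))
    ((hΦ.tendsto _).comp (tendsto_const_nhds.prodMk_nhds ha)) fun i => hmin i hu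

theorem pgm_bounded_and_cluster_points_fixed_general (n : ℕ)
    (g : EuclideanSpace ℝ (Fin n) → ℝ)
    (hg_conv : ConvexOn ℝ Set.univ g)
    (h : EuclideanSpace ℝ (Fin n) → ℝ)
    (h' : EuclideanSpace ℝ (Fin n) → EuclideanSpace ℝ (Fin n))
    (hdiff : ∀ x, HasGradientAt h (h' x) x)
    (L τ γ : ℝ) (hτ : 0 < τ) (hγ : 0 < γ) (hγlt : γ < 1 / (τ * L))
    (hlip : ∀ x z, ‖h' x - h' z‖ ≤ L * ‖x - z‖)
    (f : EuclideanSpace ℝ (Fin n) → ℝ) (hf : ∀ x, f x = g x + τ * h x)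
    (hcoercive : ∀ M : ℝ, ∃ r : ℝ, ∀ x, r ≤ ‖x‖ → M ≤ f x)
    (x : ℕ → EuclideanSpace ℝ (Fin n))
    (hiter : ∀ k : ℕ,
      IsMinOn (fun u => (1/2) * ‖u - (x k - (γ * τ) • h' (x k))‖ ^ 2 + γ * g u)
        Set.univ (x (k + 1))) :
    (∃ R : ℝ, ∀ k, ‖x k‖ ≤ R) ∧
      ∀ xb : EuclideanSpace ℝ (Fin n),
        (∃ φ : ℕ → ℕ, StrictMono φ ∧ Tendsto (fun j => x (φ j)) atTop (nhds xb)) →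
        IsMinOn (fun u => (1/2) * ‖u - (xb - (γ * τ) • h' xb)‖ ^ 2 + γ * g u)
          Set.univ xb := by
  have hg : Continuous g := continuousOn_univ.1 (hg_conv.continuousOn isOpen_univ)
  have hh : Continuous h := continuous_iff_continuousAt.2 fun z => (hdiff z).continuousAt
  have hh' : Continuous h' :=
    (LipschitzWith.of_dist_le' (by simpa [dist_eq_norm] using hlip)).continuous
  have hfc : Continuous f := by
    rw [funext hf]
    fun_prop
  have hc : 0 < 1 / (2 * γ) - τ * L / 2 := by
    have := mul_lt_one_of_lt_one_div hγ hγlt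
    rw [sub_pos, div_lt_div_iff₀ (by norm_num) (by positivity)]
    nlinarith
  have hdec : ∀ k,
      f (x (k + 1)) + (1 / (2 * γ) - τ * L / 2) * ‖x (k + 1) - x k‖ ^ 2 ≤ f (x k) := fun k => by
    simpa only [hf] using prox_grad_sufficient_decrease hdiff hlip hτ.le hγ (hiter k)
  have hanti : Antitone fun k => f (x k) := antitone_of_sufficient_decrease hc.le hdec
  obtain ⟨R, hR⟩ := exists_norm_le_of_coercive hcoercive (f (x 0))
  refine ⟨⟨R, fun k => hR _ (hanti (Nat.zero_le k))⟩, ?_⟩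
  rintro xb ⟨φ, hφ, hxφ⟩
  obtain ⟨m, hm⟩ := hfc.exists_forall_le (tendsto_cocompact_atTop_of_coercive hcoercive)
  have hstep := tendsto_succ_sub_nhds_zero_of_sufficient_decrease (v := fun k => f (x k)) hc hdec
    ⟨f m, by rintro _ ⟨k, rfl⟩; exact hm _⟩
  have hxφ_succ : Tendsto (fun j => x (φ j + 1)) atTop (𝓝 xb) := by
    simpa using (hstep.comp hφ.tendsto_atTop).add hxφ
  refine isMinOn_of_tendsto (Φ := fun u a => (1/2) * ‖u - (a - (γ * τ) • h' a)‖ ^ 2 + γ * g u)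
    ?_ (fun j => hiter (φ j)) hxφ_succ hxφ
  fun_prop

/-- PGM with `γ ∈ (0, 1/(τL))` and coercive `f = g + τh`: the iterates are bounded and
every accumulation point `x̄` is a fixed point of the proximal gradient map, i.e.,
`x̄` minimizes the prox objective at `x̄ − γτ∇h(x̄)`. -/
theorem pgm_bounded_and_cluster_points_fixed (n : ℕ)
    (g : EuclideanSpace ℝ (Fin n) → ℝ)
    (hg_conv : ConvexOn ℝ Set.univ g) (hg_lsc : LowerSemicontinuous g)
    (h : EuclideanSpace ℝ (Fin n) → ℝ)
    (h' : EuclideanSpace ℝ (Fin n) → EuclideanSpace ℝ (Fin n))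
    (hdiff : ∀ x, HasGradientAt h (h' x) x)
    (L τ γ : ℝ) (hL : 0 < L) (hτ : 0 < τ) (hγ : 0 < γ) (hγlt : γ < 1 / (τ * L))
    (hlip : ∀ x z, ‖h' x - h' z‖ ≤ L * ‖x - z‖)
    (f : EuclideanSpace ℝ (Fin n) → ℝ) (hf : ∀ x, f x = g x + τ * h x)
    (hcoercive : ∀ M : ℝ, ∃ r : ℝ, ∀ x, r ≤ ‖x‖ → M ≤ f x)
    (x : ℕ → EuclideanSpace ℝ (Fin n))
    (hiter : ∀ k : ℕ,
      IsMinOn (fun u => (1/2) * ‖u - (x k - (γ * τ) • h' (x k))‖ ^ 2 + γ * g u)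
        Set.univ (x (k + 1))) :
    (∃ R : ℝ, ∀ k, ‖x k‖ ≤ R) ∧
      ∀ xb : EuclideanSpace ℝ (Fin n),
        (∃ φ : ℕ → ℕ, StrictMono φ ∧ Tendsto (fun j => x (φ j)) atTop (nhds xb)) →
        IsMinOn (fun u => (1/2) * ‖u - (xb - (γ * τ) • h' xb)‖ ^ 2 + γ * g u)
          Set.univ xb :=
  pgm_bounded_and_cluster_points_fixed_general n g hg_conv h h' hdiff L τ γ hτ hγ hγlt hlip f hf
    hcoercive x hiter
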